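/- For every nonzero quaternion p and every real number s, the quaternion (|p|⁴·s² − 1 + 2s·p̄·i·p)·(|p|⁴·s² + 1)⁻¹·((s − i)·(s + i)⁻¹)² has norm 1. -/

import Mathlib

/-- The standard imaginary unit quaternion `i`. -/
noncomputable def qi : Quaternion ℝ := ⟨0, 1, 0, 0⟩

/-!
Write `N = ‖p‖⁴`. Conjugating the imaginary unit `i` by `p` gives a purely imaginary quaternion
`p̄ i p` of norm `‖p‖²`, so the first factor splits into the real part `N s² - 1` and an imaginary
part of norm `2 |s| ‖p‖²`. Its norm is therefore `√((N s² - 1)² + 4 N s²) = N s² + 1`, which the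
second factor cancels. The last factor has norm one because `s - i` is the conjugate of `s + i`.
-/

namespace Quaternion

section CommRing

variable {R : Type*} [CommRing R]

theorem re_star_mul_mul_of_re_eq_zero (p : ℍ[R]) {u : ℍ[R]} (hu : u.re = 0) :
    (star p * u * p).re = 0 := by
  simp only [re_mul, re_star, imI_mul, imJ_mul, imK_mul, imI_star, imJ_star, imK_star, hu]
  ring

theorem normSq_coe_add_of_re_eq_zero (r : R) {q : ℍ[R]} (hq : q.re = 0) :
    normSq ((r : ℍ[R]) + q) = r ^ 2 + normSq q := by
  rw [normSq_add, normSq_coe, coe_mul_eq_smul, re_smul, re_star, hq, smul_zero, mul_zero,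
    add_zero]

end CommRing

theorem norm_coe_sub_eq_norm_coe_add (s : ℝ) {u : ℍ} (hu : u.re = 0) :
    ‖(s : ℍ) - u‖ = ‖(s : ℍ) + u‖ := by
  rw [← norm_star ((s : ℍ) + u), star_add, star_coe, star_eq_neg.mpr hu, sub_eq_add_neg]

theorem norm_coe_sub_one_add_two_mul_conj {u : ℍ} (hu : u.re = 0) (hu₁ : ‖u‖ = 1)
    (p : ℍ) (s : ℝ) :
    ‖((‖p‖ ^ 4 * s ^ 2 - 1 : ℝ) : ℍ) + 2 * (s : ℍ) * star p * u * p‖ = ‖p‖ ^ 4 * s ^ 2 + 1 := by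
  have h2s : (2 : ℍ) * s = ((2 * s : ℝ) : ℍ) := by push_cast; rfl
  rw [h2s]
  have hre : ((2 * s : ℝ) * star p * u * p : ℍ).re = 0 := by
    rw [mul_assoc, mul_assoc, coe_mul_eq_smul, re_smul, ← mul_assoc,
      re_star_mul_mul_of_re_eq_zero p hu, smul_zero]
  have hnormSq : normSq ((2 * s : ℝ) * star p * u * p : ℍ) = 4 * s ^ 2 * ‖p‖ ^ 4 := by
    simp only [map_mul, normSq_coe, normSq_star, normSq_eq_norm_mul_self, hu₁]
    ring
  have hsq : ‖((‖p‖ ^ 4 * s ^ 2 - 1 : ℝ) : ℍ) + (2 * s : ℝ) * star p * u * p‖ ^ 2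
      = (‖p‖ ^ 4 * s ^ 2 + 1) ^ 2 := by
    rw [sq, ← normSq_eq_norm_mul_self, normSq_coe_add_of_re_eq_zero _ hre, hnormSq]
    ring
  exact (pow_left_inj₀ (norm_nonneg _) (by positivity) two_ne_zero).mp hsq

end Quaternion

theorem norm_qi : ‖qi‖ = 1 := by
  rw [← pow_eq_one_iff_of_nonneg (norm_nonneg _) two_ne_zero, sq,
    ← Quaternion.normSq_eq_norm_mul_self, Quaternion.normSq_def']
  simp [qi]

theorem coe_add_qi_ne_zero (s : ℝ) : (s : Quaternion ℝ) + qi ≠ 0 := fun h => by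
  have : (0 : ℝ) + 1 = 0 := congrArg QuaternionAlgebra.imI h
  norm_num at this

theorem Tminus_norm_one_general (p : Quaternion ℝ) (s : ℝ) :
    ‖(((‖p‖ ^ 4 * s ^ 2 - 1 : ℝ) : Quaternion ℝ) + 2 * (s : Quaternion ℝ) * star p * qi * p) *
        (((‖p‖ ^ 4 * s ^ 2 + 1 : ℝ) : Quaternion ℝ))⁻¹ *
        (((s : Quaternion ℝ) - qi) * ((s : Quaternion ℝ) + qi)⁻¹) ^ 2‖ = 1 := by
  have hqi : qi.re = 0 := rfl
  have hc : 0 < ‖p‖ ^ 4 * s ^ 2 + 1 := by positivity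
  rw [norm_mul, norm_mul, norm_pow, norm_mul, norm_inv, norm_inv,
    Quaternion.norm_coe_sub_one_add_two_mul_conj hqi norm_qi,
    Quaternion.norm_coe_sub_eq_norm_coe_add s hqi, Quaternion.norm_coe, Real.norm_of_nonneg hc.le,
    mul_inv_cancel₀ hc.ne', mul_inv_cancel₀ (norm_ne_zero_iff.mpr (coe_add_qi_ne_zero s)),
    one_pow, one_mul]

theorem Tminus_norm_one (p : Quaternion ℝ) (hp : p ≠ 0) (s : ℝ) :
    ‖(((‖p‖ ^ 4 * s ^ 2 - 1 : ℝ) : Quaternion ℝ) + 2 * (s : Quaternion ℝ) * star p * qi * p) *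
        (((‖p‖ ^ 4 * s ^ 2 + 1 : ℝ) : Quaternion ℝ))⁻¹ *
        (((s : Quaternion ℝ) - qi) * ((s : Quaternion ℝ) + qi)⁻¹) ^ 2‖ = 1 :=
  Tminus_norm_one_general p s
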